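/- For all positive integers n, the double sum over integers i, j of binom(2n, n+i) * binom(2n, n+j) * |i * j * (i^2 - j^2)| equals (2 n^3 (n-1) / (2n-1)) * binom(2n, n)^2. -/

import Mathlib

/-- Binomial coefficient `n.choose k` extended to an integer lower index,
vanishing when `k < 0` (and, as usual, when `k > n`). -/
def ichoose (n : ℕ) (k : ℤ) : ℤ := if 0 ≤ k then (n.choose k.toNat : ℤ) else 0

/-!
Since `|i j (i² - j²)| = |i| |j| |i² - j²|` and `|a² - b²| = ∑ₖ (2k+1) ([k < a] - [k < b])²`,
the double sum only depends on the tail sums `Tₖ = ∑_{|i| > k} |i| C(2n, n+i)`: it equals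
`2 ∑ₖ (2k+1) (T₀ Tₖ - Tₖ²)`. From `i C(2n, n+i) = n (C(2n-1, n+i-1) - C(2n-1, n+i))` the tails
telescope to `Tₖ = 2n C(2n-1, n+k)`. Finally the recurrence
`(n-1-k) C(2n-1, n+k) = (n+k+1) C(2n-1, n+k+1)` turns the remaining sums into telescoping ones:
`∑ₖ (2k+1) C(2n-1, n+k) = n C(2n-1, n)` and `(2n-1) ∑ₖ (2k+1) C(2n-1, n+k)² = n² C(2n-1, n)²`.
-/

open Finset

section AbsSqSub

variable {R : Type*} [CommRing R] [LinearOrder R] [IsStrictOrderedRing R]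

theorem sum_range_ite_lt_two_mul_add_one {a N : ℕ} (h : a ≤ N) :
    ∑ k ∈ range N, (if k < a then (2 * k + 1 : R) else 0) = a ^ 2 := by
  rw [← sum_filter, show {k ∈ range N | k < a} = range a by ext; simp only [mem_filter, mem_range, and_iff_right_iff_imp]; omega]
  induction a with
  | zero => simp
  | succ a ih => rw [sum_range_succ, ih (by omega)]; push_cast; ring

theorem abs_sq_sub_sq_eq_sum {a b N : ℕ} (ha : a ≤ N) (hb : b ≤ N) :
    |(a : R) ^ 2 - (b : R) ^ 2|
      = ∑ k ∈ range N, (2 * k + 1 : R) * ((if k < a then 1 else 0) - (if k < b then 1 else 0)) ^ 2 := by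
  have hterm : ∀ k : ℕ,
      (2 * k + 1 : R) * ((if k < a then 1 else 0) - (if k < b then 1 else 0)) ^ 2
        = (if k < a then (2 * k + 1 : R) else 0) + (if k < b then (2 * k + 1 : R) else 0)
          - 2 * (if k < min a b then (2 * k + 1 : R) else 0) := by
    intro k
    simp only [lt_min_iff]
    split_ifs <;> first | (exfalso; omega) | ring
  rw [sum_congr rfl fun k _ => hterm k, sum_sub_distrib, sum_add_distrib, ← mul_sum,
    sum_range_ite_lt_two_mul_add_one ha, sum_range_ite_lt_two_mul_add_one hb,
    sum_range_ite_lt_two_mul_add_one (le_trans (min_le_left _ _) ha)]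
  rcases le_total a b with hab | hab
  · have : (a : R) ^ 2 ≤ (b : R) ^ 2 := by gcongr
    rw [min_eq_left hab, abs_of_nonpos (by linarith)]; ring
  · have : (b : R) ^ 2 ≤ (a : R) ^ 2 := by gcongr
    rw [min_eq_right hab, abs_of_nonneg (by linarith)]; ring

theorem sum_sum_mul_abs_sq_sub_sq {ι : Type*} (s : Finset ι) (h : ι → ℕ) (u : ι → R) {N : ℕ}
    (hN : ∀ i ∈ s, h i ≤ N) :
    ∑ i ∈ s, ∑ j ∈ s, u i * u j * |(h i : R) ^ 2 - (h j : R) ^ 2|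
      = 2 * ∑ k ∈ range N, (2 * k + 1) *
          ((∑ i ∈ s, u i) * (∑ i ∈ s with k < h i, u i) - (∑ i ∈ s with k < h i, u i) ^ 2) := by
  have hpair : ∀ k : ℕ,
      ∑ i ∈ s, ∑ j ∈ s, u i * u j * ((if k < h i then 1 else 0) - (if k < h j then 1 else 0)) ^ 2
        = 2 * ((∑ i ∈ s, u i) * (∑ i ∈ s with k < h i, u i) - (∑ i ∈ s with k < h i, u i) ^ 2) := by
    intro k
    set T := ∑ i ∈ s with k < h i, u i with hT
    rw [show 2 * ((∑ i ∈ s, u i) * T - T ^ 2) = T * (∑ i ∈ s, u i) + (∑ i ∈ s, u i) * T - 2 * (T * T)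
      by ring, hT, sum_filter, sum_mul_sum, sum_mul_sum, sum_mul_sum, mul_sum, ← sum_add_distrib,
      ← sum_sub_distrib]
    refine sum_congr rfl fun i _ => ?_
    rw [mul_sum, ← sum_add_distrib, ← sum_sub_distrib]
    refine sum_congr rfl fun j _ => ?_
    split_ifs <;> ring
  calc ∑ i ∈ s, ∑ j ∈ s, u i * u j * |(h i : R) ^ 2 - (h j : R) ^ 2|
      = ∑ i ∈ s, ∑ j ∈ s, ∑ k ∈ range N, (2 * k + 1 : R) *
          (u i * u j * ((if k < h i then 1 else 0) - (if k < h j then 1 else 0)) ^ 2) := by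
        refine sum_congr rfl fun i hi => sum_congr rfl fun j hj => ?_
        rw [abs_sq_sub_sq_eq_sum (hN i hi) (hN j hj), mul_sum]
        exact sum_congr rfl fun k _ => by ring
    _ = ∑ k ∈ range N, (2 * k + 1 : R) *
          ∑ i ∈ s, ∑ j ∈ s, u i * u j * ((if k < h i then 1 else 0) - (if k < h j then 1 else 0)) ^ 2 := by
        simp only [mul_sum]
        conv_rhs => rw [sum_comm]
        exact sum_congr rfl fun i _ => sum_comm
    _ = _ := by
        simp only [hpair, mul_sum]
        exact sum_congr rfl fun k _ => by ring

end AbsSqSub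

theorem sum_range_filter_le_sub {M : Type*} [AddCommGroup M] (f : ℕ → M) {N : ℕ} (k : ℕ)
    (hf : ∀ j, N ≤ j → f j = 0) :
    ∑ a ∈ range N with k ≤ a, (f a - f (a + 1)) = f k := by
  by_cases hk : k ≤ N
  · rw [show {a ∈ range N | k ≤ a} = Ico k N by ext; simp only [mem_filter, mem_range, mem_Ico]; omega]
    calc ∑ a ∈ Ico k N, (f a - f (a + 1)) = -∑ a ∈ Ico k N, (f (a + 1) - f a) := by
          rw [← sum_neg_distrib]; simp only [neg_sub]
      _ = f k := by rw [sum_Ico_sub f hk, hf N le_rfl, zero_sub, neg_neg]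
  · rw [filter_false_of_mem fun a ha => by simp only [mem_range] at ha; omega, sum_empty, hf k (by omega)]

section Choose

variable {R : Type*} [CommRing R]

theorem cast_sub_mul_choose (N j : ℕ) :
    ((N : R) - j) * N.choose j = (j + 1) * N.choose (j + 1) := by
  rcases le_or_gt j N with hj | hj
  · have := congrArg (Nat.cast (R := R)) (Nat.choose_succ_right_eq N j)
    push_cast [hj] at this
    linear_combination -this
  · simp [Nat.choose_eq_zero_of_lt hj, Nat.choose_eq_zero_of_lt (Nat.lt_succ_of_lt hj)]

theorem two_mul_sub_mul_choose_succ (N j : ℕ) :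
    (2 * (j + 1) - (N + 1) : R) * (N + 1).choose (j + 1)
      = (N + 1) * (N.choose j - N.choose (j + 1)) := by
  have h := congrArg (Nat.cast (R := R)) (Nat.add_one_mul_choose_eq N j)
  have hp := congrArg (Nat.cast (R := R)) (Nat.choose_succ_succ' N j)
  push_cast at h hp
  linear_combination -2 * h - (N + 1 : R) * hp

end Choose

-- From here on `n = m + 1`, so that the row `2n - 1 = 2m + 1` needs no truncated subtraction.

section OddRow

variable (m : ℕ)

theorem sub_mul_choose_two_mul_add_one (k : ℕ) :
    ((m : ℚ) - k) * (2 * m + 1).choose (m + 1 + k)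
      = (m + k + 2) * (2 * m + 1).choose (m + 1 + (k + 1)) := by
  have := cast_sub_mul_choose (R := ℚ) (2 * m + 1) (m + 1 + k)
  push_cast at this
  linear_combination this

theorem choose_two_mul_add_one_eq_zero : (2 * m + 1).choose (m + 1 + (m + 1)) = 0 :=
  Nat.choose_eq_zero_of_lt (by omega)

theorem sum_odd_mul_choose_two_mul_add_one :
    ∑ k ∈ range (m + 1), (2 * k + 1 : ℚ) * (2 * m + 1).choose (m + 1 + k)
      = (m + 1) * (2 * m + 1).choose (m + 1) := by
  have key : ∀ k : ℕ, (2 * k + 1 : ℚ) * (2 * m + 1).choose (m + 1 + k)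
      = (m + 1 + k) * (2 * m + 1).choose (m + 1 + k)
        - (m + 1 + (k + 1 : ℕ)) * (2 * m + 1).choose (m + 1 + (k + 1)) := by
    intro k
    push_cast
    linear_combination -sub_mul_choose_two_mul_add_one m k
  rw [sum_congr rfl fun k _ => key k, sum_range_sub' (fun k : ℕ => (m + 1 + k : ℚ) * _),
    choose_two_mul_add_one_eq_zero]
  simp

theorem sum_odd_mul_sq_choose_two_mul_add_one :
    (2 * m + 1 : ℚ) * ∑ k ∈ range (m + 1), (2 * k + 1 : ℚ) * (2 * m + 1).choose (m + 1 + k) ^ 2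
      = (m + 1) ^ 2 * (2 * m + 1).choose (m + 1) ^ 2 := by
  have key : ∀ k : ℕ, (2 * m + 1 : ℚ) * ((2 * k + 1) * (2 * m + 1).choose (m + 1 + k) ^ 2)
      = ((m + 1 + k) * (2 * m + 1).choose (m + 1 + k)) ^ 2
        - ((m + 1 + (k + 1 : ℕ)) * (2 * m + 1).choose (m + 1 + (k + 1))) ^ 2 := by
    intro k
    have h := congrArg (· ^ 2) (sub_mul_choose_two_mul_add_one m k)
    push_cast at h ⊢
    linear_combination -h
  rw [mul_sum, sum_congr rfl fun k _ => key k,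
    sum_range_sub' (fun k : ℕ => ((m + 1 + k : ℚ) * (2 * m + 1).choose (m + 1 + k)) ^ 2),
    choose_two_mul_add_one_eq_zero]
  push_cast; ring

theorem sum_odd_mul_choose_two_mul_add_one_sub_sq :
    ∑ k ∈ range (m + 1), (2 * k + 1 : ℚ) * ((2 * m + 1).choose (m + 1) * (2 * m + 1).choose (m + 1 + k)
        - (2 * m + 1).choose (m + 1 + k) ^ 2)
      = m * (m + 1) / (2 * m + 1) * (2 * m + 1).choose (m + 1) ^ 2 := by
  have hsplit : ∑ k ∈ range (m + 1), (2 * k + 1 : ℚ) * ((2 * m + 1).choose (m + 1)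
        * (2 * m + 1).choose (m + 1 + k) - (2 * m + 1).choose (m + 1 + k) ^ 2)
      = (2 * m + 1).choose (m + 1) * ∑ k ∈ range (m + 1), (2 * k + 1 : ℚ) * (2 * m + 1).choose (m + 1 + k)
        - ∑ k ∈ range (m + 1), (2 * k + 1 : ℚ) * (2 * m + 1).choose (m + 1 + k) ^ 2 := by
    rw [mul_sum, ← sum_sub_distrib]
    exact sum_congr rfl fun k _ => by ring
  rw [hsplit, sum_odd_mul_choose_two_mul_add_one, eq_comm, div_mul_eq_mul_div,
    div_eq_iff (by positivity)]
  linear_combination sum_odd_mul_sq_choose_two_mul_add_one m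

theorem succ_mul_choose_two_mul_succ (a : ℕ) :
    ((a + 1) * (2 * (m + 1)).choose (m + 1 + (a + 1)) : ℚ)
      = (m + 1) * ((2 * m + 1).choose (m + 1 + a) - (2 * m + 1).choose (m + 1 + (a + 1))) := by
  have := two_mul_sub_mul_choose_succ (R := ℚ) (2 * m + 1) (m + 1 + a)
  rw [show 2 * m + 1 + 1 = 2 * (m + 1) by ring] at this
  push_cast at this ⊢
  linear_combination this / 2

theorem choose_two_mul_succ_self :
    (2 * (m + 1)).choose (m + 1) = 2 * (2 * m + 1).choose (m + 1) := by
  rw [show 2 * (m + 1) = 2 * m + 1 + 1 by ring, Nat.choose_succ_succ', Nat.choose_symm_half]; ring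

end OddRow

theorem ichoose_natCast (N k : ℕ) : ichoose N k = N.choose k := by
  simp [ichoose]

theorem ichoose_sub (N : ℕ) (k : ℤ) : ichoose N (N - k) = ichoose N k := by
  unfold ichoose
  split_ifs
  · rw [show (N - k).toNat = N - k.toNat by omega, Nat.choose_symm (by omega)]
  · rw [Nat.choose_eq_zero_of_lt (by omega), Nat.cast_zero]
  · rw [Nat.choose_eq_zero_of_lt (by omega), Nat.cast_zero]
  · rfl

theorem nonneg_and_le_of_ichoose_ne_zero {N : ℕ} {k : ℤ} (h : ichoose N k ≠ 0) : 0 ≤ k ∧ k ≤ N := by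
  unfold ichoose at h
  split_ifs at h with hk
  · exact ⟨hk, by by_contra hN; exact h (by rw [Nat.choose_eq_zero_of_lt (by omega), Nat.cast_zero])⟩
  · exact absurd rfl h

theorem sum_filter_natAbs_mul_ichoose (m k : ℕ) :
    ∑ i ∈ Icc (-((m + 1 : ℕ) : ℤ)) ((m + 1 : ℕ) : ℤ) with k < i.natAbs,
        (i.natAbs : ℚ) * ichoose (2 * (m + 1)) ((m + 1 : ℕ) + i)
      = 2 * (m + 1) * (2 * m + 1).choose (m + 1 + k) := by
  have heven : Function.Even fun i : ℤ =>
      if k < i.natAbs then (i.natAbs : ℚ) * ichoose (2 * (m + 1)) ((m + 1 : ℕ) + i) else 0 := by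
    intro i
    dsimp only
    rw [Int.natAbs_neg, show ((m + 1 : ℕ) : ℤ) + -i = (2 * (m + 1) : ℕ) - ((m + 1 : ℕ) + i) by
      push_cast; ring, ichoose_sub]
  have hterm : ∀ a : ℕ, (if k < ((a + 1 : ℕ) : ℤ).natAbs then
      (((a + 1 : ℕ) : ℤ).natAbs : ℚ) * ichoose (2 * (m + 1)) ((m + 1 : ℕ) + ((a + 1 : ℕ) : ℤ)) else 0)
      = (m + 1) * if k ≤ a then
          ((2 * m + 1).choose (m + 1 + a) - (2 * m + 1).choose (m + 1 + (a + 1)) : ℚ) else 0 := by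
    intro a
    rw [Int.natAbs_natCast, ← Nat.cast_add, ichoose_natCast, mul_ite, mul_zero,
      ← succ_mul_choose_two_mul_succ]
    simp only [Nat.lt_succ_iff]
    push_cast; rfl
  rw [sum_filter, sum_Icc_of_even_eq_range heven, sum_range_succ', sum_congr rfl fun a _ => hterm a,
    ← mul_sum, ← sum_filter, sum_range_filter_le_sub _ k fun j hj => by
      rw [Nat.choose_eq_zero_of_lt (by omega), Nat.cast_zero]]
  simp only [Nat.cast_zero, Int.natAbs_zero, Nat.not_lt_zero, if_false, add_zero, sub_zero,
    nsmul_eq_mul, Nat.cast_ofNat]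
  ring

theorem finsum_finsum_eq_sum_sum {α β M : Type*} [AddCommMonoid M] (F : α → β → M)
    (s : Finset α) (t : Finset β) (hF : ∀ i j, F i j ≠ 0 → i ∈ s ∧ j ∈ t) :
    ∑ᶠ i, ∑ᶠ j, F i j = ∑ i ∈ s, ∑ j ∈ t, F i j := by
  rw [finsum_congr fun i => finsum_eq_sum_of_support_subset (F i) fun j hj => (hF i j hj).2]
  refine finsum_eq_sum_of_support_subset _ fun i hi => ?_
  by_contra hs
  exact hi (sum_eq_zero fun j _ => by_contra fun h => hs (hF i j h).1)

theorem finsum_finsum_ichoose_mul_abs (m : ℕ) :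
    ∑ᶠ i : ℤ, ∑ᶠ j : ℤ,
        ((ichoose (2 * (m + 1)) ((m + 1 : ℕ) + i) : ℚ) * (ichoose (2 * (m + 1)) ((m + 1 : ℕ) + j) : ℚ)
          * |(i : ℚ) * (j : ℚ) * ((i : ℚ) ^ 2 - (j : ℚ) ^ 2)|)
      = 8 * (m + 1) ^ 2 * ∑ k ∈ range (m + 1), (2 * k + 1 : ℚ) *
          ((2 * m + 1).choose (m + 1) * (2 * m + 1).choose (m + 1 + k)
            - (2 * m + 1).choose (m + 1 + k) ^ 2) := by
  set s := Icc (-((m + 1 : ℕ) : ℤ)) ((m + 1 : ℕ) : ℤ)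
  set c : ℤ → ℚ := fun i => ichoose (2 * (m + 1)) ((m + 1 : ℕ) + i)
  have hsupp : ∀ i, c i ≠ 0 → i ∈ s := fun i hi => by
    have := nonneg_and_le_of_ichoose_ne_zero (Int.cast_ne_zero.mp hi)
    simp only [s, mem_Icc]; omega
  have habs : ∀ i j : ℤ, c i * c j * |(i : ℚ) * j * ((i : ℚ) ^ 2 - (j : ℚ) ^ 2)|
      = (i.natAbs * c i) * (j.natAbs * c j) * |(i.natAbs : ℚ) ^ 2 - (j.natAbs : ℚ) ^ 2| := by
    intro i j
    simp only [Nat.cast_natAbs, Int.cast_abs, sq_abs, abs_mul]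
    ring
  have hbound : ∀ i ∈ s, i.natAbs ≤ m + 1 := fun i hi => by simp only [s, mem_Icc] at hi; omega
  have htotal : ∑ i ∈ s, (i.natAbs : ℚ) * c i = ∑ i ∈ s with 0 < i.natAbs, (i.natAbs : ℚ) * c i :=
    (sum_filter_of_ne fun i _ h => Nat.pos_of_ne_zero fun h0 => h (by simp [h0])).symm
  rw [finsum_finsum_eq_sum_sum _ s s fun i j h =>
      ⟨hsupp i (left_ne_zero_of_mul (left_ne_zero_of_mul h)),
        hsupp j (right_ne_zero_of_mul (left_ne_zero_of_mul h))⟩]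
  simp only [habs]
  rw [sum_sum_mul_abs_sq_sub_sq s Int.natAbs (fun i => (i.natAbs : ℚ) * c i) hbound, htotal]
  simp only [s, c, sum_filter_natAbs_mul_ichoose, add_zero, mul_sum]
  exact sum_congr rfl fun k _ => by ring

theorem stmt17 (n : ℕ) (hn : 1 ≤ n) :
    ∑ᶠ i : ℤ, ∑ᶠ j : ℤ,
        ((ichoose (2 * n) (n + i) : ℚ) * (ichoose (2 * n) (n + j) : ℚ)
          * |(i : ℚ) * (j : ℚ) * ((i : ℚ) ^ 2 - (j : ℚ) ^ 2)|)
      = 2 * (n : ℚ) ^ 3 * ((n : ℚ) - 1) / (2 * n - 1) * ((2 * n).choose n : ℚ) ^ 2 := by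
  obtain ⟨m, rfl⟩ : ∃ m, n = m + 1 := ⟨n - 1, by omega⟩
  rw [finsum_finsum_ichoose_mul_abs, sum_odd_mul_choose_two_mul_add_one_sub_sq,
    choose_two_mul_succ_self]
  push_cast
  rw [show 2 * ((m : ℚ) + 1) - 1 = 2 * m + 1 by ring]
  ring
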